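/- Let (N,M) be a marked proper Petri net having a home cluster C. If some reachable marking M' is dead (enables no transitions), then M' = Mrk(C), the cluster C consists of exactly one place, and C contains no transitions. Moreover, if (N,M) is deadlock-free, then C contains at least one transition. -/

import Mathlib

open scoped Classical

/-- A Petri net over places `P` and transitions `T`, given by preset and postset
of each transition (this encodes the flow relation `F`). -/
structure PetriNet (P T : Type) where
  pre : T → Finset P
  post : T → Finset P

namespace PetriNet

variable {P T : Type} [DecidableEq P] (N : PetriNet P T)

/-- A transition is enabled if each input place holds at least one token. -/
def enabled (M : P → ℕ) (t : T) : Prop := ∀ p ∈ N.pre t, 1 ≤ M p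

/-- Firing a transition. -/
def fire (M : P → ℕ) (t : T) : P → ℕ :=
  fun p => M p - (if p ∈ N.pre t then 1 else 0) + (if p ∈ N.post t then 1 else 0)

/-- `Fires M σ M'` : the firing sequence σ is enabled in M and leads to M'. -/
inductive Fires : (P → ℕ) → List T → (P → ℕ) → Prop
  | nil (M : P → ℕ) : Fires M [] M
  | cons {M : P → ℕ} {t : T} {σ : List T} {M'' : P → ℕ} :
      N.enabled M t → Fires (N.fire M t) σ M'' → Fires M (t :: σ) M''

/-- Reachability of markings. -/
def Reach (M M' : P → ℕ) : Prop := ∃ σ : List T, N.Fires M σ M'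

/-- The set of transitions enabled in a marking. -/
def en (M : P → ℕ) : Set T := {t | N.enabled M t}

/-- Lucency: reachable markings are determined by their sets of enabled transitions. -/
def Lucent (M : P → ℕ) : Prop :=
  ∀ M1 M2 : P → ℕ, N.Reach M M1 → N.Reach M M2 → N.en M1 = N.en M2 → M1 = M2

/-- Free-choice: presets of any two transitions are equal or disjoint. -/
def FreeChoice : Prop :=
  ∀ t1 t2 : T, N.pre t1 = N.pre t2 ∨ N.pre t1 ∩ N.pre t2 = ∅

/-- Proper: every transition has a nonempty preset and postset. -/
def Proper : Prop := ∀ t : T, (N.pre t).Nonempty ∧ (N.post t).Nonempty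

/-- The directed edge (flow) relation on nodes `P ⊕ T`. -/
def edge : (P ⊕ T) → (P ⊕ T) → Prop
  | Sum.inl p, Sum.inr t => p ∈ N.pre t
  | Sum.inr t, Sum.inl p => p ∈ N.post t
  | _, _ => False

/-- `InCluster x y` : y is in the cluster of x (smallest set containing x closed
under adding output transitions of places and input places of transitions). -/
inductive InCluster : (P ⊕ T) → (P ⊕ T) → Prop
  | refl (x : P ⊕ T) : InCluster x x
  | toTrans {x : P ⊕ T} {p : P} {t : T} :
      InCluster x (Sum.inl p) → p ∈ N.pre t → InCluster x (Sum.inr t)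
  | toPlace {x : P ⊕ T} {t : T} {p : P} :
      InCluster x (Sum.inr t) → p ∈ N.pre t → InCluster x (Sum.inl p)

/-- The cluster of a node. -/
def cluster (x : P ⊕ T) : Set (P ⊕ T) := {y | N.InCluster x y}

/-- A set of nodes is a cluster if it is the cluster of some node. -/
def IsCluster (C : Set (P ⊕ T)) : Prop := ∃ x : P ⊕ T, C = N.cluster x

/-- `Mrk(C)` : one token on each place of `C`, no tokens elsewhere. -/
noncomputable def clusterMrk (C : Set (P ⊕ T)) : P → ℕ :=
  fun p => if Sum.inl p ∈ C then 1 else 0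

/-- A home marking is reachable from every reachable marking. -/
def IsHomeMarking (M MH : P → ℕ) : Prop := ∀ M', N.Reach M M' → N.Reach M' MH

/-- A home cluster is a cluster whose marking `Mrk(C)` is a home marking. -/
def HomeCluster (M : P → ℕ) (C : Set (P ⊕ T)) : Prop :=
  N.IsCluster C ∧ N.IsHomeMarking M (PetriNet.clusterMrk C)

/-- A conflict-pair for `(N,M)`. -/
def ConflictPair (M M1 M2 : P → ℕ) : Prop :=
  N.Reach M M1 ∧ N.Reach M M2 ∧
  (∃ t, N.enabled M1 t) ∧ (∃ t, N.enabled M2 t) ∧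
  (∀ t, ¬ (N.enabled M1 t ∧ N.enabled M2 t)) ∧
  (∀ t, N.enabled M1 t → ∃ p ∈ N.pre t, 1 ≤ M2 p) ∧
  (∀ t, N.enabled M2 t → ∃ p ∈ N.pre t, 1 ≤ M1 p)

/-- A disentangled path `⟨p_1,t_1,p_2,…,t_{n-1},p_n⟩`, given by its lists of
places and transitions: consecutive nodes are connected by the flow relation and
all places lie in pairwise distinct clusters. -/
def IsDisPath (ps : List P) (ts : List T) : Prop :=
  ps.length = ts.length + 1 ∧
  (∀ (i : ℕ) (t : T) (p p' : P), ts[i]? = some t → ps[i]? = some p →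
      ps[i + 1]? = some p' → p ∈ N.pre t ∧ p' ∈ N.post t) ∧
  ps.Pairwise (fun a b => N.cluster (Sum.inl a) ≠ N.cluster (Sum.inl b))

/-- `Exp M σ σ'` : σ' is obtained from σ by repeatedly expediting transitions
(moving the transition at position j to an earlier position i, provided the
prefix of length i followed by that transition is enabled from M and no
transition at positions i..j-1 shares its cluster). -/
inductive Exp (M : P → ℕ) (σ : List T) : List T → Prop
  | refl : Exp M σ σ
  | step {σ' : List T} {i j : ℕ} (h : Exp M σ σ') (hij : i < j) (hj : j < σ'.length)
      (ha : ∃ Mx, N.Fires M (σ'.take i ++ [σ'.get ⟨j, hj⟩]) Mx)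
      (hb : ∀ (k : ℕ) (hk : k < σ'.length), i ≤ k → k < j →
        N.cluster (Sum.inr (σ'.get ⟨k, hk⟩)) ≠ N.cluster (Sum.inr (σ'.get ⟨j, hj⟩))) :
      Exp M σ ((σ'.eraseIdx j).insertIdx i (σ'.get ⟨j, hj⟩))

/-- Liveness: from every reachable marking, every transition can be enabled again. -/
def Live (M : P → ℕ) : Prop :=
  ∀ M', N.Reach M M' → ∀ t : T, ∃ M'', N.Reach M' M'' ∧ N.enabled M'' t

/-- Boundedness. -/
def Bounded (M : P → ℕ) : Prop :=
  ∃ k, ∀ M', N.Reach M M' → ∀ p, M' p ≤ k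

/-- Safety (1-boundedness). -/
def Safe (M : P → ℕ) : Prop := ∀ M', N.Reach M M' → ∀ p, M' p ≤ 1

end PetriNet


/-! A dead reachable marking can only reach itself, so it must be the home marking `Mrk(C)`.
Every transition of a cluster is enabled at `Mrk(C)`, hence `C` has no transitions, and a
transition-free cluster is the single place generating it. Conversely, in a proper net a
transition enabled at `Mrk(C)` has an input place in `C` and therefore lies in `C`; so if the
reachable marking `Mrk(C)` is not dead, `C` contains a transition. -/

namespace PetriNet

variable {P T : Type} {N : PetriNet P T}

theorem Reach.refl [DecidableEq P] (M : P → ℕ) : N.Reach M M := ⟨[], Fires.nil M⟩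

theorem Reach.eq_of_dead [DecidableEq P] {M X : P → ℕ} (hdead : ∀ t, ¬ N.enabled M t)
    (h : N.Reach M X) : X = M := by
  obtain ⟨σ, hσ⟩ := h
  cases hσ with
  | nil => rfl
  | cons hen _ => exact absurd hen (hdead _)

theorem mem_cluster_self (x : P ⊕ T) : x ∈ N.cluster x := InCluster.refl x

namespace IsCluster

variable {C : Set (P ⊕ T)}

theorem inl_mem_of_inr_mem (hC : N.IsCluster C) {t : T} {p : P} (ht : Sum.inr t ∈ C)
    (hp : p ∈ N.pre t) : Sum.inl p ∈ C := by
  obtain ⟨x, rfl⟩ := hC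
  exact InCluster.toPlace ht hp

theorem inr_mem_of_inl_mem (hC : N.IsCluster C) {t : T} {p : P} (hp : Sum.inl p ∈ C)
    (hpt : p ∈ N.pre t) : Sum.inr t ∈ C := by
  obtain ⟨x, rfl⟩ := hC
  exact InCluster.toTrans hp hpt

theorem enabled_clusterMrk (hC : N.IsCluster C) {t : T} (ht : Sum.inr t ∈ C) :
    N.enabled (clusterMrk C) t := fun p hp => by
  simp [clusterMrk, hC.inl_mem_of_inr_mem ht hp]

theorem enabled_clusterMrk_iff (hC : N.IsCluster C) {t : T} (hpre : (N.pre t).Nonempty) :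
    N.enabled (clusterMrk C) t ↔ Sum.inr t ∈ C := by
  refine ⟨fun hen => ?_, hC.enabled_clusterMrk⟩
  obtain ⟨p, hp⟩ := hpre
  have hpC : Sum.inl p ∈ C := by
    by_contra hpC
    simpa [clusterMrk, hpC] using hen p hp
  exact hC.inr_mem_of_inl_mem hpC hp

theorem eq_singleton_of_forall_inr_notMem (hC : N.IsCluster C) (hnt : ∀ t, Sum.inr t ∉ C) :
    ∃ p : P, C = {Sum.inl p} := by
  obtain ⟨x, rfl⟩ := hC
  obtain p | t := x
  · refine ⟨p, Set.eq_singleton_iff_unique_mem.2 ⟨mem_cluster_self _, fun y hy => ?_⟩⟩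
    induction hy with
    | refl => rfl
    | toTrans hp hpt => exact absurd (InCluster.toTrans hp hpt) (hnt _)
    | toPlace ht => exact absurd ht (hnt _)
  · exact absurd (mem_cluster_self _) (hnt t)

end IsCluster

end PetriNet

/-- In a marked proper Petri net with a home cluster C, any dead
reachable marking equals Mrk(C), C consists of a single place and no
transitions; and if the net is deadlock-free, C contains a transition. -/
theorem two_types_of_clusters {P T : Type} [DecidableEq P]
    (N : PetriNet P T) (M : P → ℕ) (C : Set (P ⊕ T))
    (hp : N.Proper) (hc : N.HomeCluster M C) :
    (∀ M', N.Reach M M' → (∀ t, ¬ N.enabled M' t) →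
      M' = PetriNet.clusterMrk C ∧ (∃ p : P, ∀ q : P, Sum.inl q ∈ C ↔ q = p) ∧
      ∀ t : T, Sum.inr t ∉ C) ∧
    ((∀ M', N.Reach M M' → ∃ t, N.enabled M' t) → ∃ t : T, Sum.inr t ∈ C) := by
  obtain ⟨hC, hhome⟩ := hc
  refine ⟨fun M' hreach hdead => ?_, fun hlive => ?_⟩
  · have hM' : M' = PetriNet.clusterMrk C := ((hhome M' hreach).eq_of_dead hdead).symm
    have hnt : ∀ t : T, Sum.inr t ∉ C := fun t ht =>
      hdead t (hM' ▸ hC.enabled_clusterMrk ht)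
    obtain ⟨p, rfl⟩ := hC.eq_singleton_of_forall_inr_notMem hnt
    exact ⟨hM', ⟨p, fun q => by simp⟩, hnt⟩
  · obtain ⟨t, hen⟩ := hlive _ (hhome M (PetriNet.Reach.refl M))
    exact ⟨t, (hC.enabled_clusterMrk_iff (hp t).1).1 hen⟩
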